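/- arXiv:1007.1737 — 2 statements merged into one kernel-verified Lean document; each statement's English description precedes it below -/
import Mathlib

section
/- Kepler's third law from the inverse-square law: let x : ℝ → ℝ² be a twice differentiable curve, K > 0, a > 0, T > 0, and f ∈ ℝ² with ‖f‖ < 2a. Assume: (i) x''(t) = −(K/‖x(t)‖³) • x(t) and x(t) ≠ 0 for all t; (ii) for every t, ‖x(t)‖ + ‖x(t) − f‖ = 2a (the orbit is an ellipse with semi-major axis a and one focus at the origin); (iii) for every t, x(t) × x'(t) = 2πab/T, where b := √(a² − ‖f‖²/4) (the area πab of the ellipse is swept in one period T). Then a³/T² = K/(4π²); equivalently, the ratio (2a)³/T² equals 2K/π² and hence is the same for every such orbit with the same force constant K. -/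
/-!
Squaring the focal equation ‖x‖ + ‖x - f‖ = 2a turns the ellipse into the conic
‖x‖ = b²/a + ⟪x, f⟫/(2a), whose right side is affine in x. Differentiating ‖x‖² twice along the
orbit, once directly and once through the conic, and using the inverse-square law gives
‖x‖²‖x'‖² - ⟪x, x'⟫² = K b²/a: the squared areal velocity is K times the semi-latus rectum.
In the plane the left side is (x × x')², and x × x' = 2πab/T then yields a³/T² = K/(4π²).
-/

noncomputable section

/-- Planar cross product `u × v = u₁v₂ − u₂v₁` on `ℝ²`. -/
def cross (u v : EuclideanSpace ℝ (Fin 2)) : ℝ := u 0 * v 1 - u 1 * v 0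

open RealInnerProductSpace

theorem norm_eq_of_norm_add_norm_sub_eq {E : Type*} [NormedAddCommGroup E] [InnerProductSpace ℝ E]
    {p f : E} {a : ℝ} (ha : a ≠ 0) (h : ‖p‖ + ‖p - f‖ = 2 * a) :
    ‖p‖ = (a ^ 2 - ‖f‖ ^ 2 / 4) / a + ⟪p, f⟫ / (2 * a) := by
  have hsq : (2 * a - ‖p‖) ^ 2 = ‖p‖ ^ 2 - 2 * ⟪p, f⟫ + ‖f‖ ^ 2 := by
    rw [← norm_sub_sq_real, ← h]; ring
  field_simp
  linear_combination (-2) * hsq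

theorem norm_sq_mul_norm_sq_sub_inner_sq_eq_of_conic_orbit {E : Type*} [NormedAddCommGroup E]
    [InnerProductSpace ℝ E] {x v : ℝ → E} {K C : ℝ} {e : E}
    (hx : ∀ t, HasDerivAt x (v t) t) (hv : ∀ t, HasDerivAt v (-(K / ‖x t‖ ^ 3) • x t) t)
    (hne : ∀ t, x t ≠ 0) (hconic : ∀ t, ‖x t‖ = C + ⟪x t, e⟫) (t : ℝ) :
    ‖x t‖ ^ 2 * ‖v t‖ ^ 2 - ⟪x t, v t⟫ ^ 2 = K * C := by
  have hr : ∀ s, HasDerivAt (fun s => ‖x s‖) ⟪v s, e⟫ s := by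
    intro s
    have h := ((hx s).inner ℝ (hasDerivAt_const s e)).const_add C
    simp only [inner_zero_right, zero_add] at h
    exact h.congr_of_eventuallyEq (.of_forall hconic)
  have hrdv : ∀ s, ‖x s‖ * ⟪v s, e⟫ = ⟪x s, v s⟫ := by
    intro s
    have h := ((hr s).pow 2).unique (hx s).norm_sq
    simp only [Nat.cast_ofNat, Nat.add_one_sub_one, pow_one] at h
    linarith
  have h₁ := (hr t).mul ((hv t).inner ℝ (hasDerivAt_const t e))
  rw [show ((fun s => ‖x s‖) * fun s => ⟪v s, e⟫) = fun s => ⟪x s, v s⟫ from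
    funext hrdv] at h₁
  have key := h₁.unique ((hx t).inner ℝ (hv t))
  have hpos : 0 < ‖x t‖ := norm_pos_iff.mpr (hne t)
  simp only [inner_zero_right, zero_add, real_inner_smul_left, real_inner_smul_right,
    real_inner_self_eq_norm_sq, show ⟪x t, e⟫ = ‖x t‖ - C by linarith [hconic t]] at key
  rw [← hrdv]
  field_simp at key
  linear_combination -key

theorem cross_sq (u v : EuclideanSpace ℝ (Fin 2)) :
    cross u v ^ 2 = ‖u‖ ^ 2 * ‖v‖ ^ 2 - ⟪u, v⟫ ^ 2 := by
  simp only [cross, EuclideanSpace.real_norm_sq_eq, PiLp.inner_apply, Fin.sum_univ_two,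
    RCLike.inner_apply, conj_trivial]
  ring

theorem kepler_third_law_general
    (x : ℝ → EuclideanSpace ℝ (Fin 2))
    (hx : Differentiable ℝ x) (hx' : Differentiable ℝ (deriv x))
    (K a T : ℝ) (ha : 0 < a)
    (f : EuclideanSpace ℝ (Fin 2)) (hf : ‖f‖ < 2 * a)
    (hacc : ∀ t : ℝ, deriv (deriv x) t = (-(K / ‖x t‖ ^ 3)) • x t)
    (hne : ∀ t : ℝ, x t ≠ 0)
    (hellipse : ∀ t : ℝ, ‖x t‖ + ‖x t - f‖ = 2 * a)
    (harea : ∀ t : ℝ,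
      cross (x t) (deriv x t) =
        2 * Real.pi * a * Real.sqrt (a ^ 2 - ‖f‖ ^ 2 / 4) / T) :
    a ^ 3 / T ^ 2 = K / (4 * Real.pi ^ 2) := by
  have hb2 : 0 < a ^ 2 - ‖f‖ ^ 2 / 4 := by nlinarith [norm_nonneg f]
  set b2 := a ^ 2 - ‖f‖ ^ 2 / 4
  have hconic : ∀ t, ‖x t‖ = b2 / a + ⟪x t, (2 * a)⁻¹ • f⟫ := fun t => by
    rw [real_inner_smul_right, norm_eq_of_norm_add_norm_sub_eq ha.ne' (hellipse t)]
    ring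
  have hlaw : (2 * Real.pi * a * Real.sqrt b2 / T) ^ 2 = K * (b2 / a) := by
    rw [← harea 0, cross_sq]
    exact norm_sq_mul_norm_sq_sub_inner_sq_eq_of_conic_orbit (fun t => (hx t).hasDerivAt)
      (fun t => hacc t ▸ (hx' t).hasDerivAt) hne hconic 0
  rw [div_pow, mul_pow, Real.sq_sqrt hb2.le] at hlaw
  have hπ := Real.pi_pos
  calc a ^ 3 / T ^ 2 = (2 * Real.pi * a) ^ 2 * b2 / T ^ 2 * (a / (4 * Real.pi ^ 2 * b2)) := by
        field_simp
        ring
    _ = K / (4 * Real.pi ^ 2) := by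
        rw [hlaw]
        field_simp

/-- Kepler's third law from the inverse-square law: for an elliptical orbit
(semi-major axis `a`, focus at the origin) obeying the area law with period
`T` under a centripetal inverse-square acceleration of constant `K`, one has
`a³/T² = K/(4π²)`; hence `(2a)³/T² = 2K/π²` is the same for all such orbits. -/
theorem kepler_third_law
    (x : ℝ → EuclideanSpace ℝ (Fin 2))
    (hx : Differentiable ℝ x) (hx' : Differentiable ℝ (deriv x))
    (K a T : ℝ) (hK : 0 < K) (ha : 0 < a) (hT : 0 < T)
    (f : EuclideanSpace ℝ (Fin 2)) (hf : ‖f‖ < 2 * a)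
    (hacc : ∀ t : ℝ, deriv (deriv x) t = (-(K / ‖x t‖ ^ 3)) • x t)
    (hne : ∀ t : ℝ, x t ≠ 0)
    (hellipse : ∀ t : ℝ, ‖x t‖ + ‖x t - f‖ = 2 * a)
    (harea : ∀ t : ℝ,
      cross (x t) (deriv x t) =
        2 * Real.pi * a * Real.sqrt (a ^ 2 - ‖f‖ ^ 2 / 4) / T) :
    a ^ 3 / T ^ 2 = K / (4 * Real.pi ^ 2) :=
  kepler_third_law_general x hx hx' K a T ha f hf hacc hne hellipse harea
end
end

section
/- The inverse-distance law is not equivalent to the area law on a genuine ellipse: let x : ℝ → ℝ² be a twice differentiable curve, a > 0, and f ∈ ℝ² with 0 < ‖f‖ < 2a (so the ellipse has positive eccentricity). Assume that for every t, ‖x(t)‖ + ‖x(t) − f‖ = 2a and x(t) ≠ 0, and that the area law holds with nonzero constant: x(t) × x'(t) = h for all t, with h ≠ 0. Then there is no constant c such that ‖x(t)‖·‖x'(t)‖ = c for all t; i.e. the speed of the planet is not inversely proportional to its distance from the Sun. -/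
/-!
If `‖x‖·‖x'‖ = c`, the planar identity `(x × x')² + ⟪x, x'⟫² = ‖x‖²‖x'‖²` gives
`⟪x, x'⟫² = c² - h²`, so by continuity `⟪x, x'⟫` is constant. Then `‖x‖²` is affine in `t`,
and being bounded on the ellipse it is constant. So `‖x‖` and `‖x - f‖ = 2a - ‖x‖` are both
constant, which makes `x'` orthogonal to `x` and to `f`. As `x × x' = h ≠ 0`, this forces
`x × f = 0` for all `t`; differentiating, `x' × f = 0` too, so `x'` is both parallel and
orthogonal to `f ≠ 0`, i.e. `x' = 0`, contradicting `h ≠ 0`.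
-/

noncomputable section

open scoped RealInnerProductSpace

theorem cross_mul_cross (u v w z : EuclideanSpace ℝ (Fin 2)) :
    cross u v * cross w z = ⟪u, w⟫ * ⟪v, z⟫ - ⟪u, z⟫ * ⟪v, w⟫ := by
  simp only [cross, PiLp.inner_apply, Fin.sum_univ_two, RCLike.inner_apply, conj_trivial]
  ring

theorem cross_sq_add_inner_sq (u v : EuclideanSpace ℝ (Fin 2)) :
    cross u v ^ 2 + ⟪u, v⟫ ^ 2 = ‖u‖ ^ 2 * ‖v‖ ^ 2 := by
  rw [sq, cross_mul_cross, real_inner_self_eq_norm_sq, real_inner_self_eq_norm_sq,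
    real_inner_comm u v]
  ring

@[simp]
theorem cross_zero_right (u : EuclideanSpace ℝ (Fin 2)) : cross u 0 = 0 := by
  simp [cross]

theorem eq_zero_of_cross_eq_zero_of_inner_eq_zero {u v : EuclideanSpace ℝ (Fin 2)}
    (hcross : cross u v = 0) (hinner : ⟪u, v⟫ = 0) (hv : v ≠ 0) : u = 0 := by
  have := cross_sq_add_inner_sq u v
  rw [hcross, hinner, zero_pow two_ne_zero, add_zero, eq_comm, mul_eq_zero] at this
  simpa [hv] using this

theorem HasDerivAt.cross {u v : ℝ → EuclideanSpace ℝ (Fin 2)} {u' v' : EuclideanSpace ℝ (Fin 2)}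
    {t : ℝ} (hu : HasDerivAt u u' t) (hv : HasDerivAt v v' t) :
    HasDerivAt (fun s => cross (u s) (v s)) (cross u' (v t) + cross (u t) v') t := by
  have coord (w : ℝ → EuclideanSpace ℝ (Fin 2)) (w' : EuclideanSpace ℝ (Fin 2))
      (hw : HasDerivAt w w' t) (i : Fin 2) : HasDerivAt (fun s => w s i) (w' i) t :=
    (PiLp.hasFDerivAt_apply 2 (w t) i).comp_hasDerivAt t hw
  exact (((coord u u' hu 0).fun_mul (coord v v' hv 1)).fun_sub
    ((coord u u' hu 1).fun_mul (coord v v' hv 0))).congr_deriv (by simp only [_root_.cross]; ring)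

theorem Continuous.exists_eq_const_of_sq_eq_const {X : Type*} [TopologicalSpace X]
    [PreconnectedSpace X] {g : X → ℝ} (hg : Continuous g) {C : ℝ} (hC : ∀ t, g t ^ 2 = C) :
    ∃ b, ∀ t, g t = b := by
  have hmaps : Set.MapsTo g Set.univ {√C, -√C} := fun t _ => by
    rw [← hC t, Real.sqrt_sq_eq_abs]
    rcases abs_choice (g t) with h | h <;> simp [h]
  obtain ⟨b, -, hb⟩ := isPreconnected_univ.eqOn_const_of_mapsTo (Set.toFinite _).isDiscrete
    hg.continuousOn hmaps (Set.insert_nonempty _ _)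
  exact ⟨b, fun t => hb (Set.mem_univ t)⟩

theorem eq_of_hasDerivAt_const_of_bddAbove {F : ℝ → ℝ} {b : ℝ} (hF : ∀ t, HasDerivAt F b t)
    (hbdd : BddAbove (Set.range F)) (s t : ℝ) : F s = F t := by
  have haffine (t : ℝ) : F t = F 0 + b * t := by
    have hG (s : ℝ) : HasDerivAt (fun s => F s - b * s) 0 s := by
      simpa using (hF s).fun_sub ((hasDerivAt_id' s).const_mul b)
    have := is_const_of_deriv_eq_zero (fun s => (hG s).differentiableAt) (fun s => (hG s).deriv) t 0
    simp only [mul_zero, sub_zero] at this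
    linarith
  obtain ⟨M, hM⟩ := hbdd
  have hb : b = 0 := by
    by_contra hb
    have := hM ⟨(M - F 0 + 1) / b, rfl⟩
    rw [haffine, mul_div_cancel₀ _ hb] at this
    linarith
  rw [haffine s, haffine t, hb]
  ring

theorem inner_eq_zero_of_hasDerivAt_of_norm_eq_const {E : Type*} [NormedAddCommGroup E]
    [InnerProductSpace ℝ E] {y : ℝ → E} {y' : E} {t r : ℝ} (hy : HasDerivAt y y' t)
    (hr : ∀ s, ‖y s‖ = r) : ⟪y t, y'⟫ = 0 := by
  have hconst : (‖y ·‖ ^ 2) = fun _ => r ^ 2 := funext fun s => by rw [hr]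
  have := hy.norm_sq.unique (hconst ▸ hasDerivAt_const t (r ^ 2))
  linarith

theorem norm_eq_of_inner_deriv_eq_const_of_bddAbove {E : Type*} [NormedAddCommGroup E]
    [InnerProductSpace ℝ E] {y : ℝ → E} (hy : Differentiable ℝ y) {b : ℝ}
    (hb : ∀ t, ⟪y t, deriv y t⟫ = b) (hbdd : BddAbove (Set.range (‖y ·‖))) (s t : ℝ) :
    ‖y s‖ = ‖y t‖ := by
  obtain ⟨M, hM⟩ := hbdd
  have hbdd_sq : BddAbove (Set.range (‖y ·‖ ^ 2)) := ⟨M ^ 2, by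
    rintro _ ⟨t, rfl⟩
    exact pow_le_pow_left₀ (norm_nonneg _) (hM ⟨t, rfl⟩) 2⟩
  have hderiv (t : ℝ) : HasDerivAt (‖y ·‖ ^ 2) (2 * b) t := hb t ▸ (hy t).hasDerivAt.norm_sq
  exact (sq_eq_sq₀ (norm_nonneg _) (norm_nonneg _)).mp
    (eq_of_hasDerivAt_const_of_bddAbove hderiv hbdd_sq s t)

theorem inverse_distance_law_fails_on_ellipse_general
    (x : ℝ → EuclideanSpace ℝ (Fin 2))
    (hx : Differentiable ℝ x) (hx' : Differentiable ℝ (deriv x))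
    (a : ℝ)
    (f : EuclideanSpace ℝ (Fin 2)) (hf0 : f ≠ 0)
    (hellipse : ∀ t : ℝ, ‖x t‖ + ‖x t - f‖ = 2 * a)
    (h : ℝ) (hh : h ≠ 0)
    (harea : ∀ t : ℝ, cross (x t) (deriv x t) = h) :
    ¬ ∃ c : ℝ, ∀ t : ℝ, ‖x t‖ * ‖deriv x t‖ = c := by
  rintro ⟨c, hc⟩
  have hv (t : ℝ) : HasDerivAt x (deriv x t) t := (hx t).hasDerivAt
  obtain ⟨b, hb⟩ : ∃ b, ∀ t, ⟪x t, deriv x t⟫ = b :=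
    (hx.continuous.inner hx'.continuous).exists_eq_const_of_sq_eq_const (C := c ^ 2 - h ^ 2)
      fun t => by
        rw [← hc t, mul_pow, ← cross_sq_add_inner_sq, harea, add_sub_cancel_left]
  have hr (t : ℝ) : ‖x t‖ = ‖x 0‖ :=
    norm_eq_of_inner_deriv_eq_const_of_bddAbove hx hb ⟨2 * a, by
      rintro _ ⟨t, rfl⟩
      linarith [hellipse t, norm_nonneg (x t - f)]⟩ t 0
  have hvx (t : ℝ) : ⟪x t, deriv x t⟫ = 0 := inner_eq_zero_of_hasDerivAt_of_norm_eq_const (hv t) hr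
  have hvf (t : ℝ) : ⟪f, deriv x t⟫ = 0 := by
    have hvxf := inner_eq_zero_of_hasDerivAt_of_norm_eq_const ((hv t).sub_const f)
      (r := 2 * a - ‖x 0‖) fun s => by linarith [hellipse s, hr s]
    rwa [inner_sub_left, hvx, zero_sub, neg_eq_zero] at hvxf
  have hxf (t : ℝ) : cross (x t) f = 0 := by
    have := cross_mul_cross (x t) (deriv x t) (x t) f
    rw [harea, real_inner_comm f, hvf, real_inner_comm (x t) (deriv x t), hvx] at this
    simpa [hh] using this
  have hvf_cross : cross (deriv x 0) f = 0 := by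
    have hconst : (fun s => cross (x s) f) = fun _ => 0 := funext hxf
    have := ((hv 0).cross (hasDerivAt_const 0 f)).unique (hconst ▸ hasDerivAt_const 0 0)
    simpa using this
  have hv0 : deriv x 0 = 0 :=
    eq_zero_of_cross_eq_zero_of_inner_eq_zero hvf_cross (by rw [real_inner_comm, hvf]) hf0
  exact hh (by simpa [hv0] using (harea 0).symm)

/-- On a genuine ellipse (positive eccentricity, focus at the origin) obeying
the area law with nonzero constant, the speed is not inversely proportional
to the distance from the Sun: `‖x(t)‖·‖x'(t)‖` is not constant. -/
theorem inverse_distance_law_fails_on_ellipse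
    (x : ℝ → EuclideanSpace ℝ (Fin 2))
    (hx : Differentiable ℝ x) (hx' : Differentiable ℝ (deriv x))
    (a : ℝ) (ha : 0 < a)
    (f : EuclideanSpace ℝ (Fin 2)) (hf0 : f ≠ 0) (hf : ‖f‖ < 2 * a)
    (hellipse : ∀ t : ℝ, ‖x t‖ + ‖x t - f‖ = 2 * a)
    (hne : ∀ t : ℝ, x t ≠ 0)
    (h : ℝ) (hh : h ≠ 0)
    (harea : ∀ t : ℝ, cross (x t) (deriv x t) = h) :
    ¬ ∃ c : ℝ, ∀ t : ℝ, ‖x t‖ * ‖deriv x t‖ = c :=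
  inverse_distance_law_fails_on_ellipse_general x hx hx' a f hf0 hellipse h hh harea
end
end
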